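/- Let m ≥ 1 and let (τ_j, ξ_j) ∈ ℝ × ℝ^d for j = 0, 1, …, m satisfy Σ_{j=0}^m τ_j = 0 and Σ_{j=0}^m ξ_j = 0. Then max_{0 ≤ j ≤ m} |τ_j + |ξ_j|²| ≥ (1/(m+1)) · max_{0 ≤ j ≤ m} |ξ_j|². -/
import Mathlib


/-- the modulation lower bound. If `Σ τ_j = 0` and `Σ ξ_j = 0`
(over `j = 0, …, m`), then
`max_j |τ_j + |ξ_j|²| ≥ (1/(m+1)) · max_j |ξ_j|²`. -/
theorem modulation_bound (d m : ℕ) (hm : 1 ≤ m)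
    (τ : Fin (m + 1) → ℝ) (ξ : Fin (m + 1) → EuclideanSpace ℝ (Fin d))
    (hτ : ∑ j, τ j = 0) (hξ : ∑ j, ξ j = 0) :
    (1 / ((m : ℝ) + 1)) * (Finset.univ.sup' Finset.univ_nonempty fun j => ‖ξ j‖ ^ 2)
      ≤ Finset.univ.sup' Finset.univ_nonempty fun j => |τ j + ‖ξ j‖ ^ 2| := by
  set M : ℝ := Finset.univ.sup' Finset.univ_nonempty fun j => |τ j + ‖ξ j‖ ^ 2| with hM
  have hmpos : (0 : ℝ) < (m : ℝ) + 1 := by positivity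
  rw [div_mul_eq_mul_div, one_mul, div_le_iff₀ hmpos]
  -- max ‖ξ‖² ≤ Σ ‖ξ_j‖²
  have h1 : (Finset.univ.sup' Finset.univ_nonempty fun j => ‖ξ j‖ ^ 2)
      ≤ ∑ j, ‖ξ j‖ ^ 2 := by
    apply Finset.sup'_le
    intro j _
    exact Finset.single_le_sum (f := fun j => ‖ξ j‖ ^ 2)
      (fun i _ => by positivity) (Finset.mem_univ j)
  have h2 : ∑ j, ‖ξ j‖ ^ 2 = ∑ j, (τ j + ‖ξ j‖ ^ 2) := by
    rw [Finset.sum_add_distrib, hτ, zero_add]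
  have h3 : ∑ j, (τ j + ‖ξ j‖ ^ 2) ≤ ∑ j : Fin (m + 1), M := by
    apply Finset.sum_le_sum
    intro j _
    exact le_trans (le_abs_self _)
      (Finset.le_sup' (fun j => |τ j + ‖ξ j‖ ^ 2|) (Finset.mem_univ j))
  have h4 : ∑ j : Fin (m + 1), M = M * ((m : ℝ) + 1) := by
    rw [Finset.sum_const, Finset.card_univ, Fintype.card_fin]
    push_cast
    ring
  linarith
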